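/- arXiv:1901.01626 — 2 statements merged into one kernel-verified Lean document; each statement's English description precedes it below -/
import Mathlib

section
/- Impossibility of separate source-channel coding in Example 1. Let (S₁, S₂) be binary with P_{S₁,S₂}(0,0) = P_{S₁,S₂}(0,1) = P_{S₁,S₂}(1,1) = 1/3 and P_{S₁,S₂}(1,0) = 0, so that H(S₁ | S₂) = H(S₂ | S₁) = 2/3 bits. Consider the binary DM-TWC defined by Y₁ = X₁ ⊕ X₂ ⊕ Z and Y₂ = X₁ · X₂, where ⊕ is mod-2 addition and Z is Bernoulli(0.05) noise independent of (X₁, X₂). Then there exists no pair of independent binary random variables (X₁, X₂) such that both H(S₁ | S₂) < I(X₁; Y₂ | X₂) and H(S₂ | S₁) < I(X₂; Y₁ | X₁) hold simultaneously (mutual information in bits); hence no rate-one SSCC scheme of the form in special case (iii) can attain the distortion pair (0, 0) under Hamming distortion. -/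
open Finset

/-- Conditional mutual information `I(A;B|C)` of the joint pmf `p` on `α × β × γ`
(natural logarithm). -/
noncomputable def condMI {α β γ : Type} [Fintype α] [Fintype β] [Fintype γ]
    (p : α → β → γ → ℝ) : ℝ :=
  ∑ a, ∑ b, ∑ c, p a b c *
    Real.log ((p a b c * (∑ a', ∑ b', p a' b' c)) /
      ((∑ b', p a b' c) * (∑ a', p a' b c)))

/-- Conditional entropy `H(A|B)` of the joint pmf `p` on `α × β`. -/
noncomputable def condEnt {α β : Type} [Fintype α] [Fintype β]
    (p : α → β → ℝ) : ℝ :=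
  -∑ a, ∑ b, p a b * Real.log (p a b / (∑ a', p a' b))

/-- Mutual information `I(A;B)` of the joint pmf `p` on `α × β`. -/
noncomputable def mutInf {α β : Type} [Fintype α] [Fintype β]
    (p : α → β → ℝ) : ℝ :=
  ∑ a, ∑ b, p a b * Real.log (p a b / ((∑ b', p a b') * (∑ a', p a' b)))

/-- An `(n,k)` joint source-channel code for a two-way channel: encoders
`X_{j,i} = f_{j,i}(S_j^k, Y_j^{i-1})` and decoders `Ŝ₂^k = g₁(S₁^k, Y₁^n)`,
`Ŝ₁^k = g₂(S₂^k, Y₂^n)`. -/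
structure JSCC (S1 S2 X1 X2 Y1 Y2 R1 R2 : Type) (n k : ℕ) where
  enc1 : (i : Fin n) → (Fin k → S1) → (Fin i.1 → Y1) → X1
  enc2 : (i : Fin n) → (Fin k → S2) → (Fin i.1 → Y2) → X2
  dec1 : (Fin k → S1) → (Fin n → Y1) → Fin k → R2
  dec2 : (Fin k → S2) → (Fin n → Y2) → Fin k → R1

/-- The strict prefix `y^{i-1}` of a sequence `y^n`. -/
def prefixOf {n : ℕ} {α : Type} (y : Fin n → α) (i : Fin n) : Fin i.1 → α :=
  fun j => y ⟨j.1, j.2.trans i.2⟩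

/-- Joint pmf of `(S₁^k, S₂^k, Y₁^n, Y₂^n)` induced by a memoryless source `pS`,
a memoryless two-way channel `W` and an `(n,k)` code `C`. -/
noncomputable def codeJoint {S1 S2 X1 X2 Y1 Y2 R1 R2 : Type} {n k : ℕ}
    (pS : S1 → S2 → ℝ) (W : X1 → X2 → Y1 → Y2 → ℝ)
    (C : JSCC S1 S2 X1 X2 Y1 Y2 R1 R2 n k)
    (s1 : Fin k → S1) (s2 : Fin k → S2) (y1 : Fin n → Y1) (y2 : Fin n → Y2) : ℝ :=
  (∏ m, pS (s1 m) (s2 m)) *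
    ∏ i, W (C.enc1 i s1 (prefixOf y1 i)) (C.enc2 i s2 (prefixOf y2 i)) (y1 i) (y2 i)

/-- Expected average distortion of user 1's source reconstructed at user 2. -/
noncomputable def expDist1 {S1 S2 X1 X2 Y1 Y2 R1 R2 : Type}
    [Fintype S1] [Fintype S2] [Fintype Y1] [Fintype Y2] {n k : ℕ}
    (pS : S1 → S2 → ℝ) (W : X1 → X2 → Y1 → Y2 → ℝ)
    (C : JSCC S1 S2 X1 X2 Y1 Y2 R1 R2 n k) (d1 : S1 → R1 → ℝ) : ℝ :=
  ∑ s1 : Fin k → S1, ∑ s2 : Fin k → S2, ∑ y1 : Fin n → Y1, ∑ y2 : Fin n → Y2,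
    codeJoint pS W C s1 s2 y1 y2 * ((k : ℝ)⁻¹ * ∑ m, d1 (s1 m) (C.dec2 s2 y2 m))

/-- Expected average distortion of user 2's source reconstructed at user 1. -/
noncomputable def expDist2 {S1 S2 X1 X2 Y1 Y2 R1 R2 : Type}
    [Fintype S1] [Fintype S2] [Fintype Y1] [Fintype Y2] {n k : ℕ}
    (pS : S1 → S2 → ℝ) (W : X1 → X2 → Y1 → Y2 → ℝ)
    (C : JSCC S1 S2 X1 X2 Y1 Y2 R1 R2 n k) (d2 : S2 → R2 → ℝ) : ℝ :=
  ∑ s1 : Fin k → S1, ∑ s2 : Fin k → S2, ∑ y1 : Fin n → Y1, ∑ y2 : Fin n → Y2,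
    codeJoint pS W C s1 s2 y1 y2 * ((k : ℝ)⁻¹ * ∑ m, d2 (s2 m) (C.dec1 s1 y1 m))

/-- `(D₁, D₂)` is achievable at rate one: there is a sequence of `(n,n)` codes whose
limsup expected distortions are at most `D₁` and `D₂`. -/
def achievableRateOne {S1 S2 X1 X2 Y1 Y2 R1 R2 : Type}
    [Fintype S1] [Fintype S2] [Fintype Y1] [Fintype Y2]
    (pS : S1 → S2 → ℝ) (W : X1 → X2 → Y1 → Y2 → ℝ)
    (d1 : S1 → R1 → ℝ) (d2 : S2 → R2 → ℝ) (D1 D2 : ℝ) : Prop :=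
  ∃ C : (n : ℕ) → JSCC S1 S2 X1 X2 Y1 Y2 R1 R2 n n,
    Filter.limsup (fun n => expDist1 pS W (C n) d1) Filter.atTop ≤ D1 ∧
    Filter.limsup (fun n => expDist2 pS W (C n) d2) Filter.atTop ≤ D2

/-- The achievable distortion region at rate one: the convex closure of the set of
achievable distortion pairs. -/
noncomputable def distRegionRateOne {S1 S2 X1 X2 Y1 Y2 R1 R2 : Type}
    [Fintype S1] [Fintype S2] [Fintype Y1] [Fintype Y2]
    (pS : S1 → S2 → ℝ) (W : X1 → X2 → Y1 → Y2 → ℝ)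
    (d1 : S1 → R1 → ℝ) (d2 : S2 → R2 → ℝ) : Set (ℝ × ℝ) :=
  closure (convexHull ℝ
    {p : ℝ × ℝ | achievableRateOne pS W d1 d2 p.1 p.2})

/-- `(D₁, D₂)` is achievable at rate `R`: there is a sequence of `(n_k, k)` codes with
`k / n_k → R` whose limsup expected distortions are at most `D₁` and `D₂`. -/
def achievableAtRate {S1 S2 X1 X2 Y1 Y2 R1 R2 : Type}
    [Fintype S1] [Fintype S2] [Fintype Y1] [Fintype Y2]
    (pS : S1 → S2 → ℝ) (W : X1 → X2 → Y1 → Y2 → ℝ)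
    (d1 : S1 → R1 → ℝ) (d2 : S2 → R2 → ℝ) (R D1 D2 : ℝ) : Prop :=
  ∃ (nOf : ℕ → ℕ) (C : (k : ℕ) → JSCC S1 S2 X1 X2 Y1 Y2 R1 R2 (nOf k) k),
    Filter.Tendsto (fun k : ℕ => (k : ℝ) / (nOf k : ℝ)) Filter.atTop (nhds R) ∧
    Filter.limsup (fun k => expDist1 pS W (C k) d1) Filter.atTop ≤ D1 ∧
    Filter.limsup (fun k => expDist2 pS W (C k) d2) Filter.atTop ≤ D2

/-- Conditional rate-distortion function `R_{A|B}(D)`: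
the infimum of `I(A; Â | B)` over test channels `P_{Â|A,B}` meeting distortion `D`. -/
noncomputable def condRD {A B H : Type} [Fintype A] [Fintype B] [Fintype H]
    (p : A → B → ℝ) (d : A → H → ℝ) (D : ℝ) : ℝ :=
  sInf { r : ℝ | ∃ q : A → B → H → ℝ,
    (∀ a b h, 0 ≤ q a b h) ∧ (∀ a b, ∑ h, q a b h = 1) ∧
    (∑ a, ∑ b, ∑ h, p a b * q a b h * d a h) ≤ D ∧
    r = condMI (fun a h b => p a b * q a b h) }

/-- Wyner-Ziv rate-distortion function of source `A` with side information `B`. -/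
noncomputable def wzRD {A B H : Type} [Fintype A] [Fintype B] [Fintype H]
    (p : A → B → ℝ) (d : A → H → ℝ) (D : ℝ) : ℝ :=
  sInf { r : ℝ | ∃ (nW : ℕ) (qW : A → Fin nW → ℝ) (g : B → Fin nW → H),
    (∀ a w, 0 ≤ qW a w) ∧ (∀ a, ∑ w, qW a w = 1) ∧
    (∑ a, ∑ b, ∑ w, p a b * qW a w * d a (g b w)) ≤ D ∧
    r = condMI (fun a (w : Fin nW) b => p a b * qW a w) }

/-- Standard rate-distortion function of source `A`. -/
noncomputable def stdRD {A H : Type} [Fintype A] [Fintype H]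
    (p : A → ℝ) (d : A → H → ℝ) (D : ℝ) : ℝ :=
  sInf { r : ℝ | ∃ q : A → H → ℝ,
    (∀ a h, 0 ≤ q a h) ∧ (∀ a, ∑ h, q a h = 1) ∧
    (∑ a, ∑ h, p a * q a h * d a h) ≤ D ∧
    r = mutInf (fun a h => p a * q a h) }

/-- `I(X₁; Y₂ | X₂)` under joint input distribution `Q` and channel `W`. -/
noncomputable def chCMI12 {X1 X2 Y1 Y2 : Type}
    [Fintype X1] [Fintype X2] [Fintype Y1] [Fintype Y2]
    (Q : X1 → X2 → ℝ) (W : X1 → X2 → Y1 → Y2 → ℝ) : ℝ :=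
  condMI (fun x1 y2 x2 => Q x1 x2 * ∑ y1, W x1 x2 y1 y2)

/-- `I(X₂; Y₁ | X₁)` under joint input distribution `Q` and channel `W`. -/
noncomputable def chCMI21 {X1 X2 Y1 Y2 : Type}
    [Fintype X1] [Fintype X2] [Fintype Y1] [Fintype Y2]
    (Q : X1 → X2 → ℝ) (W : X1 → X2 → Y1 → Y2 → ℝ) : ℝ :=
  condMI (fun x2 y1 x1 => Q x1 x2 * ∑ y2, W x1 x2 y1 y2)

/-- The source distribution of Example 1:
`P(0,0) = P(0,1) = P(1,1) = 1/3`, `P(1,0) = 0`. -/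
noncomputable def exPS : Bool → Bool → ℝ :=
  fun s1 s2 => if s1 && !s2 then 0 else 1/3

/-- The two-way channel of Example 1: `Y₁ = X₁ ⊕ X₂ ⊕ Z`, `Y₂ = X₁ · X₂` with
`Z ~ Bernoulli(0.05)` independent of the inputs. -/
noncomputable def exW : Bool → Bool → Bool → Bool → ℝ :=
  fun x1 x2 y1 y2 =>
    (if y2 = (x1 && x2) then 1 else 0) * (if y1 = xor x1 x2 then 19/20 else 1/20)

/-!
Conditioned on each letter of the other input, both channel terms are mutual informations of
elementary binary channels. With `qᵢ = P(Xᵢ = 1)` and `h` the binary entropy,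
`I(X₁;Y₂|X₂) = q₂ h(q₁) ≤ q₂ log 2` (given `X₂ = 1` the output copies `X₁`, given `X₂ = 0` it is
constant) and `I(X₂;Y₁|X₁) = h(1/20 + 9/10 q₂) - h(1/20)` (a binary symmetric channel).
Beating `H(S₁|S₂) = 2/3 log 2` with the first forces `q₂ > 2/3`; as `h` decreases on `[1/2, 1]`,
the second is then below `h(13/20) - h(1/20)`, which is numerically less than `2/3 log 2`.
-/

open Real

section General

variable {α β γ : Type} [Fintype α] [Fintype β] [Fintype γ]

theorem condMI_eq_sum_condMI_slice (p : α → β → γ → ℝ) :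
    condMI p = ∑ c, condMI (fun a b (_ : Unit) => p a b c) := by
  simp only [condMI, Fintype.sum_unique]
  exact (Finset.sum_congr rfl fun a _ => Finset.sum_comm).trans Finset.sum_comm

theorem condMI_const_mul (t : ℝ) (p : α → β → γ → ℝ) :
    condMI (fun a b c => t * p a b c) = t * condMI p := by
  rcases eq_or_ne t 0 with rfl | ht
  · simp [condMI]
  have hratio : ∀ x s u v : ℝ, t * x * (t * s) / (t * u * (t * v)) = x * s / (u * v) :=
    fun x s u v => by field_simp
  simp only [condMI, Finset.mul_sum]
  refine Finset.sum_congr rfl fun a _ => Finset.sum_congr rfl fun b _ =>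
    Finset.sum_congr rfl fun c _ => ?_
  simp only [← Finset.mul_sum]
  rw [hratio, mul_assoc]

theorem condMI_mul_eq_zero (f : α → γ → ℝ) (g : β → γ → ℝ) :
    condMI (fun a b c => f a c * g b c) = 0 := by
  refine Finset.sum_eq_zero fun a _ => Finset.sum_eq_zero fun b _ =>
    Finset.sum_eq_zero fun c _ => ?_
  simp only [← Finset.mul_sum, ← Finset.sum_mul]
  rw [show f a c * g b c * ((∑ a', f a' c) * ∑ b', g b' c)
      = f a c * (∑ b', g b' c) * ((∑ a', f a' c) * g b c) by ring, log_div_self, mul_zero]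

/-- With trivial conditioning `condMI` is plain mutual information; this is
`I(A;B) = H(B) - H(B|A)` for an input law `Q` and a channel `W`. -/
theorem condMI_channel_eq {Q : α → ℝ} {W : α → β → ℝ}
    (hQ : ∀ a, 0 ≤ Q a) (hQ1 : ∑ a, Q a = 1) (hW : ∀ a b, 0 ≤ W a b)
    (hW1 : ∀ a, ∑ b, W a b = 1) :
    condMI (fun a b (_ : Unit) => Q a * W a b)
      = ∑ b, negMulLog (∑ a, Q a * W a b) - ∑ a, Q a * ∑ b, negMulLog (W a b) := by
  have hrow : ∀ a, ∑ b, Q a * W a b = Q a := fun a => by rw [← Finset.mul_sum, hW1, mul_one]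
  have hterm : ∀ a b, Q a * W a b * log (Q a * W a b / (Q a * ∑ a', Q a' * W a' b))
      = Q a * W a b * log (W a b) - Q a * W a b * log (∑ a', Q a' * W a' b) := by
    intro a b
    rcases (mul_nonneg (hQ a) (hW a b)).eq_or_lt with h | h
    · simp [← h]
    have hpos : 0 < ∑ a', Q a' * W a' b := h.trans_le <|
      Finset.single_le_sum (fun a' _ => mul_nonneg (hQ a') (hW a' b)) (Finset.mem_univ a)
    rw [mul_div_mul_left _ _ (left_ne_zero_of_mul h.ne'),
      log_div (right_ne_zero_of_mul h.ne') hpos.ne', mul_sub]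
  have hout : ∑ a, ∑ b, Q a * W a b * log (∑ a', Q a' * W a' b)
      = -∑ b, negMulLog (∑ a, Q a * W a b) := by
    rw [Finset.sum_comm]
    simp only [negMulLog, neg_mul, neg_neg, Finset.sum_neg_distrib, Finset.sum_mul]
  have hcond : ∑ a, ∑ b, Q a * W a b * log (W a b) = -∑ a, Q a * ∑ b, negMulLog (W a b) := by
    simp only [negMulLog, neg_mul, Finset.mul_sum, mul_neg, Finset.sum_neg_distrib, neg_neg,
      mul_assoc]
  simp only [condMI, Fintype.sum_unique, hrow, hQ1, mul_one, hterm, Finset.sum_sub_distrib,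
    hout, hcond]
  ring

end General

theorem sum_negMulLog_bool {f : Bool → ℝ} (hf : ∑ b, f b = 1) :
    ∑ b, negMulLog (f b) = binEntropy (f true) := by
  rw [Fintype.sum_bool] at hf
  rw [Fintype.sum_bool, binEntropy_eq_negMulLog_add_negMulLog_one_sub, ← hf, add_sub_cancel_left,
    add_comm]

theorem condMI_bsc {Q : Bool → ℝ} (hQ : ∀ x, 0 ≤ Q x) (hQ1 : ∑ x, Q x = 1) {ε : ℝ}
    (hε0 : 0 ≤ ε) (hε1 : ε ≤ 1) :
    condMI (fun x y (_ : Unit) => Q x * if y = x then 1 - ε else ε)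
      = binEntropy (ε + (1 - 2 * ε) * Q true) - binEntropy ε := by
  have hW : ∀ x y : Bool, 0 ≤ if y = x then 1 - ε else ε := fun x y => by
    split_ifs <;> linarith
  have hW1 : ∀ x : Bool, ∑ y, (if y = x then 1 - ε else ε) = 1 := fun x => by
    cases x <;> simp
  have hout : ∑ y, ∑ x, Q x * (if y = x then 1 - ε else ε) = 1 := by
    rw [Finset.sum_comm]; simp only [← Finset.mul_sum, hW1, mul_one, hQ1]
  rw [condMI_channel_eq hQ hQ1 hW hW1, sum_negMulLog_bool hout]
  simp only [sum_negMulLog_bool (hW1 _)]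
  have hcross : ∀ x : Bool, binEntropy (if true = x then 1 - ε else ε) = binEntropy ε := by
    intro x; split_ifs <;> simp
  rw [Fintype.sum_bool] at hQ1
  simp only [hcross, ← Finset.sum_mul, Fintype.sum_bool, hQ1, one_mul]
  congr 2
  simp only [↓reduceIte, Bool.true_eq_false]
  linear_combination ε * hQ1

theorem condEnt_exPS : condEnt exPS = 2/3 * log 2 := by
  norm_num [condEnt, exPS, Fintype.sum_bool]
  rw [one_div (2 : ℝ), log_inv]
  ring

theorem condEnt_exPS_swap : condEnt (fun s2 s1 => exPS s1 s2) = 2/3 * log 2 := by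
  norm_num [condEnt, exPS, Fintype.sum_bool]
  rw [one_div (2 : ℝ), log_inv]
  ring

theorem chCMI12_exW {Q1 : Bool → ℝ} (hQ1 : ∀ x, 0 ≤ Q1 x) (hQ1_sum : ∑ x, Q1 x = 1)
    (Q2 : Bool → ℝ) :
    chCMI12 (fun x1 x2 => Q1 x1 * Q2 x2) exW = Q2 true * binEntropy (Q1 true) := by
  have hidle : (fun x1 y2 (_ : Unit) => Q1 x1 * Q2 false * ∑ y1, exW x1 false y1 y2)
      = fun x1 y2 _ => Q1 x1 * (Q2 false * if y2 = false then 1 else 0) := by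
    funext x y u; cases x <;> cases y <;> simp [exW] <;> ring
  have hcopy : (fun x1 y2 (_ : Unit) => Q1 x1 * Q2 true * ∑ y1, exW x1 true y1 y2)
      = fun x1 y2 _ => Q2 true * (Q1 x1 * if y2 = x1 then 1 - 0 else 0) := by
    funext x y u; cases x <;> cases y <;> simp [exW] <;> ring
  rw [chCMI12, condMI_eq_sum_condMI_slice, Fintype.sum_bool, hidle, hcopy,
    condMI_mul_eq_zero, condMI_const_mul, condMI_bsc hQ1 hQ1_sum le_rfl zero_le_one]
  simp

theorem chCMI21_exW {Q1 : Bool → ℝ} (hQ1_sum : ∑ x, Q1 x = 1)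
    {Q2 : Bool → ℝ} (hQ2 : ∀ x, 0 ≤ Q2 x) (hQ2_sum : ∑ x, Q2 x = 1) :
    chCMI21 (fun x1 x2 => Q1 x1 * Q2 x2) exW
      = binEntropy (1/20 + 9/10 * Q2 true) - binEntropy (1/20) := by
  have hpass : (fun x2 y1 (_ : Unit) => Q1 false * Q2 x2 * ∑ y2, exW false x2 y1 y2)
      = fun x2 y1 _ => Q1 false * (Q2 x2 * if y1 = x2 then 1 - 1/20 else 1/20) := by
    funext x y u; cases x <;> cases y <;> simp [exW] <;> ring
  have hflip : (fun x2 y1 (_ : Unit) => Q1 true * Q2 x2 * ∑ y2, exW true x2 y1 y2)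
      = fun x2 y1 _ => Q1 true * (Q2 x2 * if y1 = x2 then 1 - 19/20 else 19/20) := by
    funext x y u; cases x <;> cases y <;> simp [exW] <;> ring
  rw [chCMI21, condMI_eq_sum_condMI_slice, Fintype.sum_bool, hpass, hflip, condMI_const_mul,
    condMI_const_mul, condMI_bsc hQ2 hQ2_sum (by norm_num) (by norm_num),
    condMI_bsc hQ2 hQ2_sum (by norm_num) (by norm_num)]
  rw [Fintype.sum_bool] at hQ1_sum
  rw [show (19/20 : ℝ) + (1 - 2 * (19/20)) * Q2 true = 1 - (1/20 + 9/10 * Q2 true) by ring,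
    show (1/20 : ℝ) + (1 - 2 * (1/20)) * Q2 true = 1/20 + 9/10 * Q2 true by ring,
    show (19/20 : ℝ) = 1 - 1/20 by norm_num, binEntropy_one_sub, binEntropy_one_sub]
  linear_combination (binEntropy (1/20 + 9/10 * Q2 true) - binEntropy (1/20)) * hQ1_sum

/-- Multiplied by `60` and exponentiated, this is `19^57 < 2^40 * 13^39 * 7^21`. -/
theorem binEntropy_thirteen_twentieths_lt :
    binEntropy (13/20) < 2/3 * log 2 + binEntropy (1/20) := by
  have hpow : log ((19:ℝ)^57) < log (2^40 * 13^39 * 7^21) :=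
    log_lt_log (by positivity) (by norm_num)
  rw [log_pow, log_mul (by positivity) (by positivity), log_mul (by positivity) (by positivity),
    log_pow, log_pow, log_pow] at hpow
  have hlog20 : log 20 = 2 * log 2 + log 5 := by
    rw [show (20:ℝ) = 2^2 * 5 by norm_num, log_mul (by positivity) (by norm_num), log_pow]
    push_cast; ring
  have hdiv : ∀ n : ℝ, 0 < n → log (n / 20) = log n - log 20 := fun n hn =>
    log_div hn.ne' (by norm_num)
  simp only [binEntropy, log_inv]
  rw [show (1:ℝ) - 13/20 = 7/20 by norm_num, show (1:ℝ) - 1/20 = 19/20 by norm_num,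
    hdiv 13 (by norm_num), hdiv 7 (by norm_num), hdiv 1 one_pos, hdiv 19 (by norm_num), log_one]
  push_cast at hpow
  linarith

/-- **Impossibility of separate source-channel coding in Example 1.**
For the source of Example 1, `H(S₁|S₂) = H(S₂|S₁) = 2/3` bits, and there is no pair of
independent channel inputs `(X₁, X₂)` such that both `H(S₁|S₂) < I(X₁;Y₂|X₂)` and
`H(S₂|S₁) < I(X₂;Y₁|X₁)` hold for the channel `Y₁ = X₁ ⊕ X₂ ⊕ Z`, `Y₂ = X₁ · X₂`;
hence no rate-one SSCC scheme attains `(0,0)` under Hamming distortion. -/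
theorem example1_sscc_impossibility :
    condEnt exPS = 2/3 * Real.log 2 ∧
    condEnt (fun s2 s1 => exPS s1 s2) = 2/3 * Real.log 2 ∧
    ¬ ∃ (Q1 Q2 : Bool → ℝ),
        (∀ b, 0 ≤ Q1 b) ∧ (∑ b, Q1 b = 1) ∧
        (∀ b, 0 ≤ Q2 b) ∧ (∑ b, Q2 b = 1) ∧
        condEnt exPS < chCMI12 (fun x1 x2 => Q1 x1 * Q2 x2) exW ∧
        condEnt (fun s2 s1 => exPS s1 s2)
          < chCMI21 (fun x1 x2 => Q1 x1 * Q2 x2) exW := by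
  refine ⟨condEnt_exPS, condEnt_exPS_swap, ?_⟩
  rintro ⟨Q1, Q2, hQ1, hQ1_sum, hQ2, hQ2_sum, h12, h21⟩
  rw [condEnt_exPS, chCMI12_exW hQ1 hQ1_sum] at h12
  rw [condEnt_exPS_swap, chCMI21_exW hQ1_sum hQ2 hQ2_sum] at h21
  have hQ2_le : Q2 true ≤ 1 := by
    rw [Fintype.sum_bool] at hQ2_sum; linarith [hQ2 false]
  have hQ2_gt : 2/3 < Q2 true := by
    have hcap : Q2 true * binEntropy (Q1 true) ≤ Q2 true * log 2 :=
      mul_le_mul_of_nonneg_left binEntropy_le_log_two (hQ2 true)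
    nlinarith [log_pos one_lt_two]
  have hmono : binEntropy (1/20 + 9/10 * Q2 true) < binEntropy (13/20) :=
    binEntropy_strictAntiOn (by norm_num) ⟨by linarith, by linarith⟩ (by linarith)
  linarith [binEntropy_thirteen_twentieths_lt]
end

section
/- Uncoded performance in Example 1. Let (S₁, S₂) be binary with P_{S₁,S₂}(0,0) = P_{S₁,S₂}(0,1) = P_{S₁,S₂}(1,1) = 1/3 and P_{S₁,S₂}(1,0) = 0, and let Z be Bernoulli(0.05) independent of (S₁, S₂). With uncoded transmission X₁ = S₁, X₂ = S₂ over the channel Y₁ = X₁ ⊕ X₂ ⊕ Z, Y₂ = X₁ · X₂: (a) S₁ = S₁ · S₂ almost surely, so user 2 reconstructs S₁ from (S₂, Y₂) with zero Hamming distortion; and (b) the minimum probability of error in estimating S₂ from (S₁, Y₁) = (S₁, S₁ ⊕ S₂ ⊕ Z) over all estimators g : {0,1}² → {0,1} equals 1/30 ≈ 0.033, achieved by the MAP estimator. Hence uncoded transmission in both directions yields the distortion pair (D₁, D₂) = (0, 1/30) under Hamming distortion. -/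
open Finset

/-- **Uncoded performance in Example 1.** With uncoded transmission `X₁ = S₁`, `X₂ = S₂`
over the channel `Y₁ = X₁ ⊕ X₂ ⊕ Z`, `Y₂ = X₁ · X₂`:
(a) `S₁ = S₁ · S₂` almost surely, so user 2 can reconstruct `S₁` from `(S₂, Y₂)` with
zero Hamming distortion, and (b) the minimum probability of error in estimating `S₂`
from `(S₁, Y₁)` over all estimators equals `1/30`; hence uncoded transmission yields the
distortion pair `(0, 1/30)`. -/
theorem example1_uncoded_performance :
    -- (a) `S₁ = S₁ · S₂` almost surely
    (∀ s1 s2, exPS s1 s2 ≠ 0 → (s1 && s2) = s1) ∧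
    -- (a) zero-distortion reconstruction of `S₁` from `(S₂, Y₂) = (S₂, S₁·S₂)`
    (∃ g : Bool → Bool → Bool,
      (∑ s1, ∑ s2, exPS s1 s2 *
        (if g s2 (s1 && s2) = s1 then (0:ℝ) else 1)) = 0) ∧
    -- (b) every estimator of `S₂` from `(S₁, Y₁) = (S₁, S₁ ⊕ S₂ ⊕ Z)` errs with
    -- probability at least `1/30` ...
    (∀ g : Bool → Bool → Bool,
      1/30 ≤ ∑ s1, ∑ s2, ∑ z,
        exPS s1 s2 * (if z then (1/20 : ℝ) else 19/20) *
          (if g s1 (xor (xor s1 s2) z) = s2 then 0 else 1)) ∧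
    -- ... and some estimator (the MAP estimator) attains `1/30`
    (∃ g : Bool → Bool → Bool,
      (∑ s1, ∑ s2, ∑ z,
        exPS s1 s2 * (if z then (1/20 : ℝ) else 19/20) *
          (if g s1 (xor (xor s1 s2) z) = s2 then 0 else 1)) = 1/30) := by
  refine ⟨?_, ⟨fun _ y => y, ?_⟩, ?_, ⟨fun s1 y => s1 || y, ?_⟩⟩
  · intro s1 s2 h
    cases s1 <;> cases s2 <;> simp_all [exPS]
  · norm_num [exPS, Fintype.sum_bool]
  · intro g
    rcases Bool.eq_false_or_eq_true (g true true) with h1 | h1 <;>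
    rcases Bool.eq_false_or_eq_true (g true false) with h2 | h2 <;>
    rcases Bool.eq_false_or_eq_true (g false true) with h3 | h3 <;>
    rcases Bool.eq_false_or_eq_true (g false false) with h4 | h4 <;>
      simp [exPS, Fintype.sum_bool, h1, h2, h3, h4] <;> norm_num
  · norm_num [exPS, Fintype.sum_bool]
end
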